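/- arXiv:2502.08403 — 4 statements merged into one kernel-verified Lean document; each statement's English description precedes it below -/
import Mathlib

section
/- Let σ = (v_1, …, v_n) be a route. For every start time s with s ≥ e(v_1), the begin-of-service time at the last vertex v_n of the schedule along σ with start time s equals max(s + T(σ), E(σ)). -/
/-- Begin-of-service time at the last vertex of the route `(v :: rest)` when service at `v`
begins at time `s`: `t₁ = s`, `t_{k+1} = max (t_k + d v_k v_{k+1}) (e v_{k+1})`. -/
def lastTime {V : Type*} (d : V → V → ℝ) (e : V → ℝ) : ℝ → V → List V → ℝ
  | s, _, [] => s
  | s, v, w :: rest => lastTime d e (max (s + d v w) (e w)) w rest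

/-- Total travel time `T(σ)` along the route `(v :: rest)`. -/
def travel {V : Type*} (d : V → V → ℝ) : V → List V → ℝ
  | _, [] => 0
  | v, w :: rest => d v w + travel d w rest

/-- Latest feasible start time `L(σ) = min_{1 ≤ k ≤ n} (l(v_k) - T_k(σ))` of route `(v :: rest)`. -/
def latest {V : Type*} (d : V → V → ℝ) (l : V → ℝ) : V → List V → ℝ
  | v, [] => l v
  | v, w :: rest => min (l v) (latest d l w rest - d v w)

/-- The schedule along route `(v :: rest)` starting at time `s` satisfies all deadline
constraints `t_k ≤ l(v_k)`. -/
def feasFrom {V : Type*} (d : V → V → ℝ) (e l : V → ℝ) : ℝ → V → List V → Prop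
  | s, v, [] => s ≤ l v
  | s, v, w :: rest => s ≤ l v ∧ feasFrom d e l (max (s + d v w) (e w)) w rest

/-- `E(σ)`: begin-of-service time at the last vertex of the earliest schedule
(start time `s = e v₁`). -/
def earliestEnd {V : Type*} (d : V → V → ℝ) (e : V → ℝ) (v : V) (rest : List V) : ℝ :=
  lastTime d e (e v) v rest

/-- `F(σ)`: the route `(v :: rest)` is time-window feasible, i.e. the earliest schedule
(start time `s = e v₁`) satisfies all deadline constraints. -/
def twFeasible {V : Type*} (d : V → V → ℝ) (e l : V → ℝ) (v : V) (rest : List V) : Prop :=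
  feasFrom d e l (e v) v rest

/-- For every start time `s ≥ e v₁`, the begin-of-service time at the last vertex of the
schedule along `σ = (v :: rest)` with start time `s` equals `max (s + T σ) (E σ)`. -/
theorem lastTime_eq_max {V : Type*} (d : V → V → ℝ) (e l : V → ℝ)
    (hd : ∀ u v, 0 ≤ d u v) (hel : ∀ v, e v ≤ l v)
    (v : V) (rest : List V) (s : ℝ) (hs : e v ≤ s) :
    lastTime d e s v rest = max (s + travel d v rest) (earliestEnd d e v rest) := by
  induction rest generalizing v s with
  | nil =>
    simp [lastTime, travel, earliestEnd]
    linarith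
  | cons w rest ih =>
    have h1 : lastTime d e s v (w :: rest)
        = lastTime d e (max (s + d v w) (e w)) w rest := rfl
    have h2 : earliestEnd d e v (w :: rest)
        = lastTime d e (max (e v + d v w) (e w)) w rest := rfl
    rw [h1, h2, ih w _ (le_max_right _ _), ih w _ (le_max_right _ _)]
    unfold earliestEnd
    set T := travel d w rest
    set E := lastTime d e (e w) w rest
    show max (max (s + d v w) (e w) + T) E
      = max (s + (d v w + T)) (max (max (e v + d v w) (e w) + T) E)
    have hsd : e v + d v w ≤ s + d v w := by linarith
    rcases le_total (s + d v w) (e w) with h | h <;>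
    rcases le_total (e w + T) E with h2 | h2 <;>
    · simp only [max_def]
      split_ifs <;> linarith
end

section
/- Let σ = (v_1, …, v_n) be a route. For every start time s with s ≥ e(v_1), the schedule along σ with start time s satisfies all deadline constraints (t_k ≤ l(v_k) for all 1 ≤ k ≤ n) if and only if F(σ) holds and s ≤ L(σ). -/
/-! Started at `s`, the schedule serves `v_k` no earlier than `s + T_k(σ)`, so feasibility forces
`s ≤ L(σ)`. Conversely, `t_{k+1}` is either `t_k + d(v_k, v_{k+1})` or `e(v_{k+1})`, and the
latter is harmless because every feasible schedule also serves `v_{k+1}` no earlier than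
`e(v_{k+1})`. Hence once some start time is feasible, a start time `s` is feasible exactly when
`s ≤ L(σ)`; the earliest start `e(v_1) ≤ s` then witnesses `F(σ)`. -/

section Schedule

variable {V : Type*} (d : V → V → ℝ) (e l : V → ℝ)

theorem le_latest_of_feasFrom {s : ℝ} {v : V} {rest : List V} (h : feasFrom d e l s v rest) :
    s ≤ latest d l v rest := by
  induction rest generalizing v s with
  | nil => exact h
  | cons w rest ih =>
    obtain ⟨hv, hw⟩ := h
    have hsd : s + d v w ≤ latest d l w rest := (le_max_left _ _).trans (ih hw)
    exact le_min hv (le_sub_right_of_add_le hsd)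

theorem feasFrom_of_le_latest {t s : ℝ} {v : V} {rest : List V} (ht : feasFrom d e l t v rest)
    (hs : s ≤ latest d l v rest) : feasFrom d e l s v rest := by
  induction rest generalizing v t s with
  | nil => exact hs
  | cons w rest ih =>
    obtain ⟨-, hw⟩ := ht
    have hsd : s + d v w ≤ latest d l w rest := add_le_of_le_sub_right (hs.trans (min_le_right _ _))
    have hew : e w ≤ latest d l w rest := (le_max_right _ _).trans (le_latest_of_feasFrom d e l hw)
    exact ⟨hs.trans (min_le_left _ _), ih hw (max_le hsd hew)⟩

theorem feasFrom_iff_le_latest {t s : ℝ} {v : V} {rest : List V} (ht : feasFrom d e l t v rest) :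
    feasFrom d e l s v rest ↔ s ≤ latest d l v rest :=
  ⟨le_latest_of_feasFrom d e l, feasFrom_of_le_latest d e l ht⟩

end Schedule

theorem feasFrom_iff_general {V : Type*} (d : V → V → ℝ) (e l : V → ℝ)
    (v : V) (rest : List V) (s : ℝ) (hs : e v ≤ s) :
    feasFrom d e l s v rest ↔ twFeasible d e l v rest ∧ s ≤ latest d l v rest := by
  constructor
  · intro h
    have hle : s ≤ latest d l v rest := le_latest_of_feasFrom d e l h
    exact ⟨(feasFrom_iff_le_latest d e l h).2 (hs.trans hle), hle⟩
  · rintro ⟨hF, hle⟩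
    exact (feasFrom_iff_le_latest d e l hF).2 hle

/-- For every start time `s ≥ e v₁`, the schedule along `σ = (v :: rest)` with start time `s`
satisfies all deadline constraints iff `F σ` holds and `s ≤ L σ`. -/
theorem feasFrom_iff {V : Type*} (d : V → V → ℝ) (e l : V → ℝ)
    (hd : ∀ u v, 0 ≤ d u v) (hel : ∀ v, e v ≤ l v)
    (v : V) (rest : List V) (s : ℝ) (hs : e v ≤ s) :
    feasFrom d e l s v rest ↔ twFeasible d e l v rest ∧ s ≤ latest d l v rest :=
  feasFrom_iff_general d e l v rest s hs
end

section
/- Let σ1 = (u_1, …, u_m) and σ2 = (w_1, …, w_p) be routes and let δ = d(u_m, w_1) be the travel time from the last vertex of σ1 to the first vertex of σ2. Then the earliest begin-of-service time at the last vertex of the concatenated route satisfies E(σ1 ⊕ σ2) = max(E(σ1) + δ + T(σ2), E(σ2)). -/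
lemma lastTime_ge {V : Type*} (d : V → V → ℝ) (e : V → ℝ) :
    ∀ (rest : List V) (s : ℝ) (v : V), s + travel d v rest ≤ lastTime d e s v rest := by
  intro rest
  induction rest with
  | nil => intro s v; simp [lastTime, travel]
  | cons w r ih =>
    intro s v
    simp only [lastTime, travel]
    calc s + (d v w + travel d w r) = (s + d v w) + travel d w r := by ring
    _ ≤ max (s + d v w) (e w) + travel d w r := by gcongr; exact le_max_left _ _
    _ ≤ _ := ih _ w

lemma lastTime_shift {V : Type*} (d : V → V → ℝ) (e : V → ℝ) :
    ∀ (rest : List V) (s t : ℝ) (v : V), t ≤ s →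
      lastTime d e s v rest = max (s + travel d v rest) (lastTime d e t v rest) := by
  intro rest
  induction rest with
  | nil => intro s t v h; simp [lastTime, travel, h]
  | cons w r ih =>
    intro s t v h
    simp only [lastTime, travel]
    rw [ih (max (s + d v w) (e w)) (max (t + d v w) (e w)) w (by gcongr)]
    have h1 : e w + travel d w r ≤ lastTime d e (max (t + d v w) (e w)) w r := by
      calc e w + travel d w r ≤ max (t + d v w) (e w) + travel d w r := by
            gcongr; exact le_max_right _ _
      _ ≤ _ := lastTime_ge d e r _ w
    rw [← max_add_add_right, max_assoc, max_eq_right h1]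
    ring_nf

lemma lastTime_append {V : Type*} (d : V → V → ℝ) (e : V → ℝ) (w : V) (ws : List V) :
    ∀ (us : List V) (s : ℝ) (u : V),
      lastTime d e s u (us ++ w :: ws) =
        lastTime d e (max (lastTime d e s u us + d ((u :: us).getLast (List.cons_ne_nil u us)) w)
          (e w)) w ws := by
  intro us
  induction us with
  | nil => intro s u; simp [lastTime]
  | cons a as ih =>
    intro s u
    rw [show (a :: as) ++ w :: ws = a :: (as ++ w :: ws) from rfl]
    show lastTime d e (max (s + d u a) (e a)) a (as ++ w :: ws) = _
    rw [ih _ a]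
    rfl

/-- `E(σ₁ ⊕ σ₂) = max (E σ₁ + δ + T σ₂) (E σ₂)` where `δ` is the travel time from the last
vertex of `σ₁ = (u :: us)` to the first vertex of `σ₂ = (w :: ws)`. -/
theorem earliestEnd_append {V : Type*} (d : V → V → ℝ) (e l : V → ℝ)
    (hd : ∀ u v, 0 ≤ d u v) (hel : ∀ v, e v ≤ l v)
    (u : V) (us : List V) (w : V) (ws : List V) :
    earliestEnd d e u (us ++ w :: ws) =
      max (earliestEnd d e u us + d ((u :: us).getLast (List.cons_ne_nil u us)) w + travel d w ws)
        (earliestEnd d e w ws) := by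
  unfold earliestEnd
  rw [lastTime_append d e w ws us (e u) u,
    lastTime_shift d e ws _ (e w) w (le_max_right _ _)]
  have h2 : e w + travel d w ws ≤ lastTime d e (e w) w ws := lastTime_ge d e ws _ w
  rw [← max_add_add_right, max_assoc, max_eq_right h2]
end

section
/- Let σ1 = (u_1, …, u_m) and σ2 = (w_1, …, w_p) be routes and let δ = d(u_m, w_1) be the travel time from the last vertex of σ1 to the first vertex of σ2. Then the latest feasible start time of the concatenated route satisfies L(σ1 ⊕ σ2) = min(L(σ1), L(σ2) − δ − T(σ1)). -/
/-- `L(σ₁ ⊕ σ₂) = min (L σ₁) (L σ₂ - δ - T σ₁)` where `δ` is the travel time from the last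
vertex of `σ₁ = (u :: us)` to the first vertex of `σ₂ = (w :: ws)`. -/
theorem latest_append {V : Type*} (d : V → V → ℝ) (e l : V → ℝ)
    (hd : ∀ u v, 0 ≤ d u v) (hel : ∀ v, e v ≤ l v)
    (u : V) (us : List V) (w : V) (ws : List V) :
    latest d l u (us ++ w :: ws) =
      min (latest d l u us)
        (latest d l w ws - d ((u :: us).getLast (List.cons_ne_nil u us)) w - travel d u us) := by
  induction us generalizing u with
  | nil => simp [latest, travel]
  | cons x xs ih =>
      have : ((u :: x :: xs).getLast (by simp)) = ((x :: xs).getLast (by simp)) := by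
        simp [List.getLast]
      simp only [List.cons_append, List.append_eq, latest, travel, ih x, this]
      rw [← min_sub_sub_right, min_assoc]
      ring_nf
end
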